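/- arXiv:1304.1058 — 4 statements merged into one kernel-verified Lean document; each statement's English description precedes it below -/
import Mathlib

section
/- For α > 0 and s > 0, the Laplace transform of the αL-exponential function satisfies ∫_0^∞ e^{-s x} 𝔢_α(x) dx = (1/s) · 𝔢_{α-1}(1/s), i.e. ∫_0^∞ e^{-s x} (∑_{k=0}^∞ x^k/(k!)^(α+1)) dx = (1/s) ∑_{k=0}^∞ s^{-k}/(k!)^α. -/
/-!
Expand `𝔢_α` into its power series and integrate termwise: `∫₀^∞ e^{-sx} x^k dx = k!/s^{k+1}`,
so the factor `k!` cancels one power of `k!` in the coefficient `1/(k!)^{α+1}`. The interchange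
of sum and integral is legitimate because the series of integrals of the absolute values, here
`(1/s) ∑ s^{-k}/(k!)^α`, converges for `α > 0` by the ratio test.
-/

open MeasureTheory Real Set Filter

lemma summable_pow_div_factorial_rpow (r : ℝ) {β : ℝ} (hβ : 0 < β) :
    Summable fun k : ℕ => r ^ k / (k.factorial : ℝ) ^ β := by
  refine summable_of_ratio_norm_eventually_le (r := 1 / 2) (by norm_num) ?_
  have hgrow : Tendsto (fun n : ℕ => ((n : ℝ) + 1) ^ β) atTop atTop :=
    (tendsto_rpow_atTop hβ).comp
      (tendsto_atTop_add_const_right _ 1 tendsto_natCast_atTop_atTop)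
  filter_upwards [hgrow.eventually_ge_atTop (2 * |r|)] with n hn
  have hfac : ((n + 1).factorial : ℝ) ^ β = ((n : ℝ) + 1) ^ β * (n.factorial : ℝ) ^ β := by
    rw [Nat.factorial_succ, Nat.cast_mul, Nat.cast_succ, mul_rpow (by positivity) (by positivity)]
  have hratio : |r| / ((n : ℝ) + 1) ^ β ≤ 1 / 2 := by
    rw [div_le_iff₀ (by positivity)]
    linarith
  calc ‖r ^ (n + 1) / ((n + 1).factorial : ℝ) ^ β‖
      = |r| / ((n : ℝ) + 1) ^ β * ‖r ^ n / (n.factorial : ℝ) ^ β‖ := by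
        have : (0 : ℝ) < (n.factorial : ℝ) ^ β := by positivity
        simp only [hfac, norm_div, norm_pow, norm_mul, Real.norm_eq_abs,
          abs_of_pos this, abs_of_pos (by positivity : (0 : ℝ) < ((n : ℝ) + 1) ^ β)]
        ring
    _ ≤ 1 / 2 * ‖r ^ n / (n.factorial : ℝ) ^ β‖ := by gcongr

lemma integral_exp_neg_mul_mul_pow {s : ℝ} (hs : 0 < s) (k : ℕ) :
    ∫ x in Ioi (0 : ℝ), exp (-s * x) * x ^ k = k.factorial / s ^ (k + 1) := by
  have h := integral_rpow_mul_exp_neg_mul_Ioi (a := k + 1) (by positivity) hs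
  rw [add_sub_cancel_right, Gamma_nat_eq_factorial, ← Nat.cast_succ, rpow_natCast, one_div_pow,
    one_div_mul_eq_div] at h
  rw [← h]
  refine setIntegral_congr_fun measurableSet_Ioi fun x _ => ?_
  rw [rpow_natCast, neg_mul, mul_comm]

lemma integrableOn_exp_neg_mul_mul_pow {s : ℝ} (hs : 0 < s) (k : ℕ) :
    IntegrableOn (fun x => exp (-s * x) * x ^ k) (Ioi 0) :=
  -- the Bochner integral of a non-integrable function would be `0`
  Integrable.of_integral_ne_zero <| by
    rw [integral_exp_neg_mul_mul_pow hs]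
    positivity

theorem integral_exp_neg_mul_mul_tsum_pow {s : ℝ} (hs : 0 < s) {a : ℕ → ℝ}
    (ha : Summable fun k => |a k| * k.factorial / s ^ (k + 1)) :
    ∫ x in Ioi (0 : ℝ), exp (-s * x) * ∑' k, a k * x ^ k
      = ∑' k, a k * k.factorial / s ^ (k + 1) := by
  set F : ℕ → ℝ → ℝ := fun k x => a k * (exp (-s * x) * x ^ k)
  have hintegrable (k : ℕ) : IntegrableOn (F k) (Ioi 0) :=
    (integrableOn_exp_neg_mul_mul_pow hs k).const_mul (a k)
  have hintegral (k : ℕ) : ∫ x in Ioi 0, F k x = a k * k.factorial / s ^ (k + 1) := by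
    rw [integral_const_mul, integral_exp_neg_mul_mul_pow hs, mul_div_assoc]
  have hnorm (k : ℕ) : ∫ x in Ioi 0, ‖F k x‖ = |a k| * k.factorial / s ^ (k + 1) := by
    have hF (x : ℝ) (hx : x ∈ Ioi 0) : ‖F k x‖ = |a k| * (exp (-s * x) * x ^ k) := by
      simp only [F, norm_mul, norm_pow, Real.norm_eq_abs, abs_of_pos (exp_pos _),
        abs_of_pos (mem_Ioi.mp hx)]
    rw [setIntegral_congr_fun measurableSet_Ioi hF, integral_const_mul,
      integral_exp_neg_mul_mul_pow hs, mul_div_assoc]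
  calc ∫ x in Ioi (0 : ℝ), exp (-s * x) * ∑' k, a k * x ^ k
      = ∫ x in Ioi (0 : ℝ), ∑' k, F k x := by
        simp only [F, ← tsum_mul_left, mul_left_comm]
    _ = ∑' k, ∫ x in Ioi (0 : ℝ), F k x :=
        (integral_tsum_of_summable_integral_norm hintegrable (by simpa only [hnorm] using ha)).symm
    _ = ∑' k, a k * k.factorial / s ^ (k + 1) := tsum_congr hintegral

/-- Laplace transform of the αL-exponential: ∫₀^∞ e^{-sx} 𝔢_α(x) dx = (1/s) 𝔢_{α-1}(1/s). -/
theorem laplace_alphaL_exponential (α s : ℝ) (hα : α > 0) (hs : s > 0) :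
    ∫ x in Set.Ioi (0 : ℝ),
        Real.exp (-s * x) * ∑' k : ℕ, x ^ k / (k.factorial : ℝ) ^ (α + 1)
      = (1 / s) * ∑' k : ℕ, (1 / s) ^ k / (k.factorial : ℝ) ^ α := by
  have hcoeff (k : ℕ) : ((k.factorial : ℝ) ^ (α + 1))⁻¹ * k.factorial / s ^ (k + 1)
      = 1 / s * ((1 / s) ^ k / (k.factorial : ℝ) ^ α) := by
    have : (0 : ℝ) < k.factorial := by positivity
    rw [rpow_add_one this.ne', one_div_pow, pow_succ]
    field_simp
  have hsum := (summable_pow_div_factorial_rpow (1 / s) hα).mul_left (1 / s)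
  simp_rw [div_eq_inv_mul (_ ^ _) (_ ^ (α + 1))]
  rw [integral_exp_neg_mul_mul_tsum_pow hs, tsum_congr hcoeff, tsum_mul_left]
  refine hsum.congr fun k => ?_
  rw [abs_inv, abs_of_pos (by positivity), hcoeff]
end

section
/- For ν > 0, γ > 0, α > 0, λ ∈ ℝ and s > 0, the Laplace transform identity ∫_0^∞ e^{-s x} x^{γ-1} E_{α;ν,γ}(λ x^ν) dx = s^{-γ} E_{α-1;ν,γ}(λ / s^ν) holds, where E_{α;ν,γ}(z) = ∑_{k=0}^∞ z^k / Γ(νk+γ)^{α+1}. -/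
/-!
Expand the series and integrate term by term: each term is a Gamma integral,
`∫₀^∞ e^{-sx} x^{νk+γ-1} dx = Γ(νk+γ) / s^{νk+γ}`, which cancels one power of `Γ(νk+γ)`.
The interchange is justified because the resulting series with `|λ|` in place of `λ` converges,
by the ratio test: `Γ(x+ν) / Γ(x) → ∞`, which follows from Gautschi's inequality
`x Γ(x) ≤ (x+t)^{1-t} Γ(x+t)` for `0 < t < 1`, an instance of the log-convexity of `Γ`.
-/

open MeasureTheory Real Filter Set

namespace Real

theorem mul_Gamma_le_rpow_mul_Gamma_add {t x : ℝ} (ht₀ : 0 < t) (ht₁ : t < 1) (hx : 0 < x) :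
    x * Gamma x ≤ (x + t) ^ (1 - t) * Gamma (x + t) := by
  have hxt : 0 < x + t := by linarith
  have hconv := Gamma_mul_add_mul_le_rpow_Gamma_mul_rpow_Gamma hxt (by linarith : 0 < x + t + 1)
    ht₀ (by linarith : 0 < 1 - t) (by ring)
  rw [show t * (x + t) + (1 - t) * (x + t + 1) = x + 1 by ring, Gamma_add_one hx.ne',
    Gamma_add_one hxt.ne', mul_rpow hxt.le (Gamma_pos_of_pos hxt).le, mul_left_comm,
    ← rpow_add (Gamma_pos_of_pos hxt), add_sub_cancel, rpow_one] at hconv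
  exact hconv

theorem rpow_mul_Gamma_le_two_mul_Gamma_add {t x : ℝ} (ht₀ : 0 < t) (ht₁ : t < 1)
    (htx : t ≤ x) : x ^ t * Gamma x ≤ 2 * Gamma (x + t) := by
  have hx : 0 < x := ht₀.trans_le htx
  have hsplit : x ^ t * x ^ (1 - t) = x := by rw [← rpow_add hx, add_sub_cancel, rpow_one]
  have hratio : (x + t) ^ (1 - t) ≤ 2 * x ^ (1 - t) :=
    calc (x + t) ^ (1 - t) ≤ (2 * x) ^ (1 - t) := by gcongr; linarith
      _ = 2 ^ (1 - t) * x ^ (1 - t) := mul_rpow zero_le_two hx.le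
      _ ≤ 2 ^ (1 : ℝ) * x ^ (1 - t) := by gcongr <;> linarith
      _ = 2 * x ^ (1 - t) := by rw [rpow_one]
  refine le_of_mul_le_mul_right ?_ (rpow_pos_of_pos hx (1 - t))
  calc x ^ t * Gamma x * x ^ (1 - t) = x * Gamma x := by rw [mul_right_comm, hsplit]
    _ ≤ (x + t) ^ (1 - t) * Gamma (x + t) := mul_Gamma_le_rpow_mul_Gamma_add ht₀ ht₁ hx
    _ ≤ 2 * x ^ (1 - t) * Gamma (x + t) := by gcongr
    _ = 2 * Gamma (x + t) * x ^ (1 - t) := by ring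

theorem tendsto_Gamma_add_div_Gamma_atTop {ν : ℝ} (hν : 0 < ν) :
    Tendsto (fun x => Gamma (x + ν) / Gamma x) atTop atTop := by
  set t := min ν (1 / 2)
  have ht₀ : 0 < t := lt_min hν one_half_pos
  have ht₁ : t ≤ 1 / 2 := min_le_right ν (1 / 2)
  have hlower : Tendsto (fun x : ℝ => x ^ t / 2) atTop atTop :=
    (tendsto_rpow_atTop ht₀).atTop_div_const two_pos
  refine tendsto_atTop_mono' _ ?_ hlower
  filter_upwards [eventually_ge_atTop 2] with x hx
  have hΓ : 0 < Gamma x := Gamma_pos_of_pos (by linarith)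
  have hmono : Gamma (x + t) ≤ Gamma (x + ν) :=
    Gamma_strictMonoOn_Ici.monotoneOn (by simp only [mem_Ici]; linarith)
      (by simp only [mem_Ici]; linarith) (by simp [t])
  rw [le_div_iff₀ hΓ, div_mul_eq_mul_div, div_le_iff₀ two_pos]
  calc x ^ t * Gamma x ≤ 2 * Gamma (x + t) :=
        rpow_mul_Gamma_le_two_mul_Gamma_add ht₀ (by linarith) (by linarith)
    _ ≤ Gamma (x + ν) * 2 := by linarith

end Real

theorem summable_pow_div_Gamma_rpow {ν α : ℝ} (hν : 0 < ν) (hα : 0 < α) (γ c : ℝ) :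
    Summable fun k : ℕ => c ^ k / Gamma (ν * k + γ) ^ α := by
  have hx : Tendsto (fun k : ℕ => ν * k + γ) atTop atTop :=
    tendsto_atTop_add_const_right _ γ (tendsto_natCast_atTop_atTop.const_mul_atTop hν)
  have hratio := ((tendsto_rpow_atTop hα).comp (tendsto_Gamma_add_div_Gamma_atTop hν)).comp hx
  refine summable_of_ratio_norm_eventually_le one_half_lt_one ?_
  filter_upwards [hx.eventually_gt_atTop 0, hratio.eventually_ge_atTop (2 * |c|)] with k hk hR
  simp only [Function.comp_apply] at hR
  set x := ν * k + γ
  have hΓ : 0 < Gamma x := Gamma_pos_of_pos hk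
  have hΓν : 0 < Gamma (x + ν) := Gamma_pos_of_pos (by linarith)
  have hRα : 0 < (Gamma (x + ν) / Gamma x) ^ α := by positivity
  have hsucc : ν * ((k + 1 : ℕ) : ℝ) + γ = x + ν := by push_cast; ring
  have hsplit : Gamma (x + ν) ^ α = (Gamma (x + ν) / Gamma x) ^ α * Gamma x ^ α := by
    rw [← mul_rpow (by positivity) hΓ.le, div_mul_cancel₀ _ hΓ.ne']
  rw [hsucc, norm_div, norm_div, norm_pow, norm_pow, norm_of_nonneg (rpow_nonneg hΓν.le _),
    norm_of_nonneg (rpow_nonneg hΓ.le _), hsplit]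
  calc ‖c‖ ^ (k + 1) / ((Gamma (x + ν) / Gamma x) ^ α * Gamma x ^ α)
      = ‖c‖ / (Gamma (x + ν) / Gamma x) ^ α * (‖c‖ ^ k / Gamma x ^ α) := by ring
    _ ≤ 1 / 2 * (‖c‖ ^ k / Gamma x ^ α) := by
        refine mul_le_mul_of_nonneg_right ?_ (by positivity)
        rw [div_le_iff₀ hRα, norm_eq_abs]
        linarith

theorem integral_exp_neg_mul_mul_rpow {s p : ℝ} (hs : 0 < s) (hp : 0 < p) :
    ∫ x in Ioi 0, exp (-s * x) * x ^ (p - 1) = Gamma p / s ^ p := by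
  rw [div_eq_inv_mul, ← inv_rpow hs.le, ← one_div, ← integral_rpow_mul_exp_neg_mul_Ioi hp hs]
  refine setIntegral_congr_fun measurableSet_Ioi fun x _ => ?_
  rw [neg_mul, mul_comm]

theorem integrableOn_exp_neg_mul_mul_rpow {s p : ℝ} (hs : 0 < s) (hp : 0 < p) :
    IntegrableOn (fun x => exp (-s * x) * x ^ (p - 1)) (Ioi 0) :=
  .of_integral_ne_zero <| by
    rw [integral_exp_neg_mul_mul_rpow hs hp]
    exact (div_pos (Gamma_pos_of_pos hp) (rpow_pos_of_pos hs p)).ne'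

theorem integral_exp_neg_mul_mul_tsum_rpow {s : ℝ} (hs : 0 < s) {a p : ℕ → ℝ}
    (hp : ∀ k, 0 < p k) (hsum : Summable fun k => |a k| * (Gamma (p k) / s ^ p k)) :
    ∫ x in Ioi 0, exp (-s * x) * ∑' k, a k * x ^ (p k - 1)
      = ∑' k, a k * (Gamma (p k) / s ^ p k) := by
  set F : ℕ → ℝ → ℝ := fun k x => a k * (exp (-s * x) * x ^ (p k - 1))
  have hF_int : ∀ k, IntegrableOn (F k) (Ioi 0) :=
    fun k => (integrableOn_exp_neg_mul_mul_rpow hs (hp k)).const_mul _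
  have hF_integral : ∀ k, ∫ x in Ioi 0, F k x = a k * (Gamma (p k) / s ^ p k) := fun k => by
    rw [integral_const_mul, integral_exp_neg_mul_mul_rpow hs (hp k)]
  have hF_norm : ∀ k, ∫ x in Ioi 0, ‖F k x‖ = |a k| * (Gamma (p k) / s ^ p k) := fun k => by
    rw [← integral_exp_neg_mul_mul_rpow hs (hp k), ← integral_const_mul]
    refine setIntegral_congr_fun measurableSet_Ioi fun x (hx : 0 < x) => ?_
    rw [norm_eq_abs, abs_mul, abs_of_pos (by positivity : 0 < exp (-s * x) * x ^ (p k - 1))]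
  calc ∫ x in Ioi 0, exp (-s * x) * ∑' k, a k * x ^ (p k - 1)
      = ∫ x in Ioi 0, ∑' k, F k x := by
        refine setIntegral_congr_fun measurableSet_Ioi fun x _ => ?_
        rw [← tsum_mul_left]
        exact tsum_congr fun k => by ring
    _ = ∑' k, a k * (Gamma (p k) / s ^ p k) := by
        rw [← integral_tsum_of_summable_integral_norm hF_int (by simpa only [hF_norm] using hsum)]
        exact tsum_congr hF_integral

theorem rpow_mul_mul_rpow_pow {x : ℝ} (hx : 0 < x) (c ν γ : ℝ) (k : ℕ) :
    x ^ γ * (c * x ^ ν) ^ k = c ^ k * x ^ (ν * k + γ) := by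
  rw [mul_pow, ← rpow_natCast, ← rpow_natCast, ← rpow_mul hx.le, rpow_add hx, rpow_natCast]
  ring

theorem pow_div_rpow_add_one_mul_div_rpow {s G : ℝ} (hs : 0 < s) (hG : 0 < G) (c α ν γ : ℝ)
    (k : ℕ) : c ^ k / G ^ (α + 1) * (G / s ^ (ν * k + γ))
      = s ^ (-γ) * ((c / s ^ ν) ^ k / G ^ α) := by
  rw [rpow_add_one hG.ne', rpow_add hs, rpow_neg hs.le, div_pow, ← rpow_natCast (s ^ ν),
    ← rpow_mul hs.le]
  have : 0 < G ^ α := rpow_pos_of_pos hG α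
  have : 0 < s ^ γ := rpow_pos_of_pos hs γ
  have : 0 < s ^ (ν * k) := rpow_pos_of_pos hs _
  field_simp

/-- Laplace transform of the α-Mittag--Leffler function:
∫₀^∞ e^{-sx} x^{γ-1} E_{α;ν,γ}(λ xᶺν) dx = s^{-γ} E_{α-1;ν,γ}(λ/sᶺν). -/
theorem laplace_alpha_mittag_leffler (α ν γ lam s : ℝ)
    (hα : α > 0) (hν : ν > 0) (hγ : γ > 0) (hs : s > 0) :
    ∫ x in Set.Ioi (0 : ℝ),
        Real.exp (-s * x) * x ^ (γ - 1) *
          ∑' k : ℕ, (lam * x ^ ν) ^ k / (Real.Gamma (ν * k + γ)) ^ (α + 1)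
      = s ^ (-γ) * ∑' k : ℕ, (lam / s ^ ν) ^ k / (Real.Gamma (ν * k + γ)) ^ α := by
  have hp : ∀ k : ℕ, 0 < ν * k + γ := fun k => by positivity
  have hG : ∀ k : ℕ, 0 < Gamma (ν * k + γ) := fun k => Gamma_pos_of_pos (hp k)
  have hsum : Summable fun k : ℕ => |lam ^ k / Gamma (ν * k + γ) ^ (α + 1)|
      * (Gamma (ν * k + γ) / s ^ (ν * k + γ)) := by
    simp_rw [abs_div, abs_pow, abs_of_pos (rpow_pos_of_pos (hG _) _),
      pow_div_rpow_add_one_mul_div_rpow hs (hG _)]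
    exact (summable_pow_div_Gamma_rpow hν hα γ _).mul_left _
  calc _ = ∫ x in Ioi 0, exp (-s * x) *
        ∑' k : ℕ, lam ^ k / Gamma (ν * k + γ) ^ (α + 1) * x ^ (ν * k + γ - 1) := by
        refine setIntegral_congr_fun measurableSet_Ioi fun x (hx : 0 < x) => ?_
        rw [mul_assoc, ← tsum_mul_left]
        congr 1
        refine tsum_congr fun k => ?_
        rw [← mul_div_assoc, rpow_mul_mul_rpow_pow hx, add_sub_assoc]
        ring
    _ = _ := by
        rw [integral_exp_neg_mul_mul_tsum_rpow hs hp hsum, ← tsum_mul_left]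
        simp_rw [pow_div_rpow_add_one_mul_div_rpow hs (hG _)]
end

section
/- The n-L-exponential function e_n(x) = ∑_{k=0}^∞ x^k / (k!)^{n+1} satisfies the eigenvalue relation D_{nL} e_n(a x) = a · e_n(a x) for every a, x ∈ ℝ, where D_{nL} = (d/dx) x (d/dx) x ⋯ x (d/dx) is the Laguerre operator of order n containing n+1 derivatives. -/
/-- The operator δ = x·d/dx acting on functions. -/
noncomputable def delta (f : ℝ → ℝ) : ℝ → ℝ := fun x => x * deriv f x

/-- The n-L-exponential function e_n(x) = ∑ xᵏ/(k!)^{n+1}. -/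
noncomputable def lexp (n : ℕ) (x : ℝ) : ℝ := ∑' k : ℕ, x ^ k / (k.factorial : ℝ) ^ (n + 1)

/-!
Writing `e_n(a y) = ∑ c_k y^k` with `c_k = a^k / (k!)^(n+1)`, the operator `δ = y d/dy` acts on
the coefficients as multiplication by `k`, and `d/dy` shifts them down, so `D_{nL} e_n(a y)` has
coefficients `(k+1)^(n+1) c_(k+1) = a c_k`. Everything is justified by termwise differentiation,
since `c` has infinite radius of convergence.
-/

theorem abs_mul_pow_sub_one_le {R y : ℝ} (hR : 1 ≤ R) (hy : |y| ≤ R) (b : ℝ) (k : ℕ) :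
    |b * y ^ (k - 1)| ≤ |b * R ^ k| := by
  rw [abs_mul, abs_mul, abs_pow, abs_pow, abs_of_pos (by linarith : 0 < R)]
  gcongr
  calc |y| ^ (k - 1) ≤ R ^ (k - 1) := by gcongr
    _ ≤ R ^ k := pow_le_pow_right₀ hR (Nat.sub_le k 1)

def EntireCoeffs (c : ℕ → ℝ) : Prop := ∀ r : ℝ, Summable fun k => |c k * r ^ k|

namespace EntireCoeffs

variable {c : ℕ → ℝ}

theorem summable (hc : EntireCoeffs c) (x : ℝ) : Summable fun k => c k * x ^ k :=
  (hc x).of_abs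

theorem natCast_mul (hc : EntireCoeffs c) : EntireCoeffs fun k => (k : ℝ) * c k := by
  intro r
  refine (hc (2 * r)).of_nonneg_of_le (fun k => abs_nonneg _) fun k => ?_
  have hk : (k : ℝ) ≤ 2 ^ k := by exact_mod_cast Nat.lt_two_pow_self.le
  calc |(k : ℝ) * c k * r ^ k| = (k : ℝ) * |c k * r ^ k| := by
        rw [mul_assoc, abs_mul, Nat.abs_cast]
    _ ≤ 2 ^ k * |c k * r ^ k| := by gcongr
    _ = |c k * (2 * r) ^ k| := by
        simp only [mul_pow, abs_mul, abs_pow, abs_two]; ring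

theorem natCast_pow_mul (hc : EntireCoeffs c) (m : ℕ) :
    EntireCoeffs fun k => (k : ℝ) ^ m * c k := by
  induction m with
  | zero => simpa using hc
  | succ m ih => simpa [pow_succ', mul_assoc] using ih.natCast_mul

theorem hasDerivAt_tsum_mul_pow (hc : EntireCoeffs c) (x : ℝ) :
    HasDerivAt (fun y => ∑' k : ℕ, c k * y ^ k)
      (∑' k : ℕ, ((k : ℝ) + 1) * c (k + 1) * x ^ k) x := by
  set R := |x| + 1
  have hR : 1 ≤ R := by simp [R]
  -- `k c_k y^(k-1)` is unbounded on `ℝ`, so it is dominated only on a ball containing `x`.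
  have hbound : ∀ (k : ℕ), ∀ y ∈ Metric.ball (0 : ℝ) R,
      ‖(k : ℝ) * c k * y ^ (k - 1)‖ ≤ |(k : ℝ) * c k * R ^ k| := fun k y hy =>
    abs_mul_pow_sub_one_le hR (by simpa using (Metric.mem_ball.1 hy).le) _ k
  have hx : x ∈ Metric.ball (0 : ℝ) R := by simp [R]
  have htermwise := hasDerivAt_tsum_of_isPreconnected (hc.natCast_mul R) Metric.isOpen_ball
    (convex_ball (0 : ℝ) R).isPreconnected
    (g := fun k y => c k * y ^ k) (g' := fun k y => (k : ℝ) * c k * y ^ (k - 1))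
    (fun k y _ => by simpa [mul_comm, mul_assoc] using (hasDerivAt_pow k y).const_mul (c k))
    hbound hx (hc.summable x) hx
  have hsummable : Summable fun k : ℕ => (k : ℝ) * c k * x ^ (k - 1) :=
    .of_norm_bounded (hc.natCast_mul R) fun k => hbound k x hx
  rw [hsummable.tsum_eq_zero_add] at htermwise
  simpa using htermwise

theorem delta_tsum_mul_pow (hc : EntireCoeffs c) :
    delta (fun y => ∑' k : ℕ, c k * y ^ k) =
      fun y => ∑' k : ℕ, (k : ℝ) * c k * y ^ k := by
  ext x
  rw [delta, (hc.hasDerivAt_tsum_mul_pow x).deriv, ← tsum_mul_left,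
    (hc.natCast_mul.summable x).tsum_eq_zero_add]
  simp only [Nat.cast_zero, zero_mul, zero_add, Nat.cast_add, Nat.cast_one, pow_succ]
  exact tsum_congr fun k => by ring

theorem delta_iterate_tsum_mul_pow (hc : EntireCoeffs c) (m : ℕ) :
    delta^[m] (fun y => ∑' k : ℕ, c k * y ^ k) =
      fun y => ∑' k : ℕ, (k : ℝ) ^ m * c k * y ^ k := by
  induction m with
  | zero => simp
  | succ m ih =>
    rw [Function.iterate_succ_apply', ih, (hc.natCast_pow_mul m).delta_tsum_mul_pow]
    ext y
    exact tsum_congr fun k => by ring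

end EntireCoeffs

theorem entireCoeffs_pow_div_factorial_pow (n : ℕ) (a : ℝ) :
    EntireCoeffs fun k => a ^ k / (k.factorial : ℝ) ^ (n + 1) := by
  intro r
  refine (Real.summable_pow_div_factorial |a * r|).of_nonneg_of_le (fun k => abs_nonneg _)
    fun k => ?_
  have hfac : (1 : ℝ) ≤ k.factorial := by exact_mod_cast k.factorial_pos
  rw [div_mul_eq_mul_div, ← mul_pow, abs_div, abs_pow, abs_pow, Nat.abs_cast]
  exact div_le_div_of_nonneg_left (by positivity) (by positivity)
    (le_self_pow₀ hfac (Nat.succ_ne_zero n))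

theorem succ_pow_mul_pow_div_factorial_pow (n k : ℕ) (a : ℝ) :
    ((k : ℝ) + 1) ^ (n + 1) * (a ^ (k + 1) / ((k + 1).factorial : ℝ) ^ (n + 1))
      = a * (a ^ k / (k.factorial : ℝ) ^ (n + 1)) := by
  rw [Nat.factorial_succ, Nat.cast_mul, mul_pow, Nat.cast_succ]
  field_simp
  ring

theorem lexp_mul_eq_tsum (n : ℕ) (a : ℝ) :
    (fun y => lexp n (a * y)) =
      fun y => ∑' k : ℕ, a ^ k / (k.factorial : ℝ) ^ (n + 1) * y ^ k := by
  ext y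
  exact tsum_congr fun k => by ring

/-- e_n(ax) is an eigenfunction of the Laguerre operator D_{nL} = d/dx ∘ (x d/dx)ⁿ. -/
theorem laguerre_eigenfunction (n : ℕ) (a x : ℝ) :
    deriv (delta^[n] (fun y => lexp n (a * y))) x = a * lexp n (a * x) := by
  have hc := entireCoeffs_pow_div_factorial_pow n a
  rw [lexp_mul_eq_tsum, hc.delta_iterate_tsum_mul_pow,
    ((hc.natCast_pow_mul n).hasDerivAt_tsum_mul_pow x).deriv, lexp, ← tsum_mul_left]
  refine tsum_congr fun k => ?_
  push_cast
  rw [← mul_assoc, ← pow_succ', succ_pow_mul_pow_div_factorial_pow]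
  ring
end

section
/- For μ > 0, the function u(x) = x^β with β = Γ(μ+1)^{1/μ} solves the generalized Lamb–Bateman equation ∫_0^∞ u(e^{-y^{1/μ}} x) dy = u(x) for all x > 0. -/
open MeasureTheory

/-- u(x) = x^β with β = Γ(μ+1)^{1/μ} solves the generalized Lamb--Bateman equation
∫₀^∞ u(e^{-y^{1/μ}}x) dy = u(x). -/
theorem generalized_lamb_bateman_power_solution (μ x : ℝ) (hμ : μ > 0) (hx : 0 < x) :
    ∫ y in Set.Ioi (0 : ℝ),
        (Real.exp (-(y ^ (1 / μ))) * x) ^ (Real.Gamma (μ + 1) ^ (1 / μ))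
      = x ^ (Real.Gamma (μ + 1) ^ (1 / μ)) := by
  set β := Real.Gamma (μ + 1) ^ (1 / μ) with hβdef
  have hG : 0 < Real.Gamma (μ + 1) := Real.Gamma_pos_of_pos (by linarith)
  have hβ : 0 < β := Real.rpow_pos_of_pos hG _
  have hp : 0 < 1 / μ := by positivity
  have h1 : ∀ y : ℝ, (Real.exp (-(y ^ (1 / μ))) * x) ^ β
      = x ^ β * Real.exp (-β * y ^ (1 / μ)) := by
    intro y
    rw [Real.mul_rpow (Real.exp_pos _).le hx.le, ← Real.exp_mul,
      show -(y ^ (1 / μ)) * β = -β * y ^ (1 / μ) by ring, mul_comm]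
  simp_rw [h1]
  rw [integral_const_mul, integral_exp_neg_mul_rpow hp hβ]
  have h2 : β ^ (-1 / (1 / μ)) = (Real.Gamma (μ + 1))⁻¹ := by
    rw [hβdef, ← Real.rpow_mul hG.le]
    rw [show (1 / μ) * (-1 / (1 / μ)) = -1 by field_simp]
    rw [Real.rpow_neg_one]
  rw [h2, one_div_one_div]
  field_simp
end
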